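/- Let u : ℝ² → ℝ be a C³ solution of u_yy = (u_y + 2x)·u_xx + (y − u_x)·u_xy − u_x. Then the function v(x,y) := 3u − 2x·u_x − y·u_y satisfies the linearized equation v_yy = (u_y + 2x)·v_xx + u_xx·v_y + (y − u_x)·v_xy − (u_xy + 1)·v_x at every point of ℝ². -/

import Mathlib

/-!
The equation is invariant under the weighted scaling `(x, y, u) ↦ (λ²x, λy, λ³u)`, and
`γ₀ = scale 3 u` is the generator of that symmetry, where `scale c f = c f - (2x ∂ₓ + y ∂ᵧ) f`.
By the symmetry of mixed partials, `∂ₓ ∘ scale c = scale (c - 2) ∘ ∂ₓ` and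
`∂ᵧ ∘ scale c = scale (c - 1) ∘ ∂ᵧ`, so every derivative of `γ₀` is a `scale` of the corresponding
derivative of `u`. Differentiating the equation along the field `(2x, y)` then turns the
linearized equation for `γ₀` into a polynomial identity.
-/

/-- Partial derivative of `f : ℝ² → ℝ` in the direction `v`. -/
noncomputable def pd2 (v : ℝ × ℝ) (f : ℝ × ℝ → ℝ) : ℝ × ℝ → ℝ :=
  fun p => fderiv ℝ f p v

noncomputable def dx : (ℝ × ℝ → ℝ) → ℝ × ℝ → ℝ := pd2 (1, 0)
noncomputable def dy : (ℝ × ℝ → ℝ) → ℝ × ℝ → ℝ := pd2 (0, 1)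

noncomputable def scale (c : ℝ) (f : ℝ × ℝ → ℝ) (q : ℝ × ℝ) : ℝ :=
  c * f q - 2 * q.1 * dx f q - q.2 * dy f q

variable {f g : ℝ × ℝ → ℝ} {w p : ℝ × ℝ}

section Leibniz

lemma pd2_add (hf : DifferentiableAt ℝ f p) (hg : DifferentiableAt ℝ g p) :
    pd2 w (fun q => f q + g q) p = pd2 w f p + pd2 w g p := by
  simp [pd2, fderiv_fun_add hf hg]

lemma pd2_sub (hf : DifferentiableAt ℝ f p) (hg : DifferentiableAt ℝ g p) :
    pd2 w (fun q => f q - g q) p = pd2 w f p - pd2 w g p := by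
  simp [pd2, fderiv_fun_sub hf hg]

lemma pd2_mul (hf : DifferentiableAt ℝ f p) (hg : DifferentiableAt ℝ g p) :
    pd2 w (fun q => f q * g q) p = pd2 w f p * g p + f p * pd2 w g p := by
  simp [pd2, fderiv_fun_mul hf hg]
  ring

lemma pd2_const (c : ℝ) : pd2 w (fun _ => c) p = 0 := by
  simp [pd2]

lemma pd2_fst : pd2 w (fun q => q.1) p = w.1 := by
  simp [pd2, fderiv_fst]

lemma pd2_snd : pd2 w (fun q => q.2) p = w.2 := by
  simp [pd2, fderiv_snd]

end Leibniz

lemma pd2_pair (a b : ℝ) : pd2 (a, b) f p = a * dx f p + b * dy f p := by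
  have hab : ((a, b) : ℝ × ℝ) = a • ((1 : ℝ), (0 : ℝ)) + b • ((0 : ℝ), (1 : ℝ)) := by simp
  simp only [dx, dy, pd2, hab, map_add, map_smul, smul_eq_mul]

lemma contDiff_pd2 {m n : WithTop ℕ∞} (hf : ContDiff ℝ n f) (h : m + 1 ≤ n) :
    ContDiff ℝ m (pd2 w f) :=
  (hf.fderiv_right h).clm_apply contDiff_const

lemma pd2_comm (hf : ContDiff ℝ 2 f) (v w : ℝ × ℝ) : pd2 v (pd2 w f) = pd2 w (pd2 v f) := by
  funext p
  have hd : DifferentiableAt ℝ (fderiv ℝ f) p :=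
    (hf.fderiv_right (m := 1) le_rfl).differentiable one_ne_zero p
  have hsecond (v w : ℝ × ℝ) : pd2 v (pd2 w f) p = fderiv ℝ (fderiv ℝ f) p v w := by
    change fderiv ℝ (fun q => fderiv ℝ f q w) p v = _
    simp [fderiv_clm_apply hd (differentiableAt_const w)]
  rw [hsecond, hsecond, (hf.contDiffAt.isSymmSndFDerivAt (by simp)) v w]

section Scale

variable {c : ℝ}

lemma scale_apply_eq_pd2 : scale c f p = c * f p - pd2 (2 * p.1, p.2) f p := by
  rw [scale, pd2_pair]
  ring

lemma pd2_scale (hf : ContDiff ℝ 2 f) :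
    pd2 w (scale c f) p = c * pd2 w f p - 2 * w.1 * dx f p - w.2 * dy f p
      - 2 * p.1 * dx (pd2 w f) p - p.2 * dy (pd2 w f) p := by
  have hf₁ : Differentiable ℝ f := hf.differentiable (by norm_num)
  have hfx : Differentiable ℝ (dx f) := (contDiff_pd2 hf le_rfl).differentiable one_ne_zero
  have hfy : Differentiable ℝ (dy f) := (contDiff_pd2 hf le_rfl).differentiable one_ne_zero
  unfold scale
  simp (disch := fun_prop) only [pd2_sub, pd2_mul, pd2_const, pd2_fst, pd2_snd]
  rw [dx, dy, pd2_comm hf (1, 0) w, pd2_comm hf (0, 1) w]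
  ring

lemma dx_scale (hf : ContDiff ℝ 2 f) : dx (scale c f) = scale (c - 2) (dx f) := by
  funext q
  rw [dx, pd2_scale hf, ← dx, scale]
  ring

lemma dy_scale (hf : ContDiff ℝ 2 f) : dy (scale c f) = scale (c - 1) (dy f) := by
  funext q
  rw [dy, pd2_scale hf, ← dy, scale]
  ring

end Scale

theorem gamma_0_is_symmetry (u : ℝ × ℝ → ℝ) (hu : ContDiff ℝ 3 u)
    (heq : ∀ p : ℝ × ℝ,
      dy (dy u) p = (dy u p + 2 * p.1) * dx (dx u) p
        + (p.2 - dx u p) * dx (dy u) p - dx u p) :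
    ∀ p : ℝ × ℝ,
      (fun v : ℝ × ℝ → ℝ =>
        dy (dy v) p = (dy u p + 2 * p.1) * dx (dx v) p + dx (dx u) p * dy v p
          + (p.2 - dx u p) * dx (dy v) p - (dx (dy u) p + 1) * dx v p)
      (fun q => 3 * u q - 2 * q.1 * dx u q - q.2 * dy u q) := by
  intro p
  have hu₂ : ContDiff ℝ 2 u := hu.of_le (by norm_num)
  have hux : ContDiff ℝ 2 (dx u) := contDiff_pd2 hu (by norm_num)
  have huy : ContDiff ℝ 2 (dy u) := contDiff_pd2 hu (by norm_num)
  have hγ₀ : (fun q => 3 * u q - 2 * q.1 * dx u q - q.2 * dy u q) = scale 3 u := rfl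
  rw [hγ₀, dx_scale hu₂, dy_scale hu₂, dx_scale hux, dx_scale huy, dy_scale huy]
  have hux₁ : Differentiable ℝ (dx u) := hux.differentiable (by norm_num)
  have huy₁ : Differentiable ℝ (dy u) := huy.differentiable (by norm_num)
  have huxx₁ : Differentiable ℝ (dx (dx u)) := (contDiff_pd2 hux le_rfl).differentiable one_ne_zero
  have huxy₁ : Differentiable ℝ (dx (dy u)) := (contDiff_pd2 huy le_rfl).differentiable one_ne_zero
  have hscaled := congrArg (fun h => pd2 (2 * p.1, p.2) h p) (funext heq)
  simp (disch := fun_prop) only [pd2_add, pd2_sub, pd2_mul, pd2_const, pd2_fst, pd2_snd] at hscaled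
  simp only [scale_apply_eq_pd2]
  linear_combination heq p - hscaled
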